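/- For every integer n ≥ 4, the weighted total count satisfies the exact identity (1/n!) · Σ_{k=1}^{n} |M_{n,k}| · n^k = Σ_{j=0}^{n−1} binomial(2n−1−j, n−1) · (−1)^j · β_{n−j}. -/

import Mathlib

open Finset

/-- A set partition of `Fin n`: a finite family of nonempty blocks such that
every element lies in exactly one block. -/
def IsSetPartition {n : ℕ} (P : Finset (Finset (Fin n))) : Prop :=
  (∀ B ∈ P, B.Nonempty) ∧ ∀ x : Fin n, ∃! B, B ∈ P ∧ x ∈ B

/-- The Bell number `B n`: the number of set partitions of an `n`-element set. -/
noncomputable def bell (n : ℕ) : ℕ :=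
  Nat.card {P : Finset (Finset (Fin n)) // IsSetPartition P}

/-- `beta n`: the number of set partitions of an `n`-element set with no singleton blocks. -/
noncomputable def beta (n : ℕ) : ℕ :=
  Nat.card {P : Finset (Finset (Fin n)) // IsSetPartition P ∧ ∀ B ∈ P, 2 ≤ B.card}

/-- Signed Stirling numbers of the first kind, defined by
`∑ k, stirS n k * z ^ k = z (z-1) ⋯ (z-n+1)`. -/
def stirS : ℕ → ℕ → ℤ
  | 0, 0 => 1
  | 0, _ + 1 => 0
  | _ + 1, 0 => 0
  | n + 1, k + 1 => stirS n k - (n : ℤ) * stirS n (k + 1)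

/-- Unsigned Stirling numbers of the first kind (number of permutations of `n`
elements with `k` cycles). -/
def stirU : ℕ → ℕ → ℕ
  | 0, 0 => 1
  | 0, _ + 1 => 0
  | _ + 1, 0 => 0
  | n + 1, k + 1 => stirU n k + n * stirU n (k + 1)

/-- The Matsunaga numbers `M n k`, defined by the recurrence
`M n k = n * M (n-1) k + beta n * stirS n k` for `1 ≤ k ≤ n`, and `0` whenever
`n ≤ 1`, `k ≤ 0` or `k > n`. -/
noncomputable def matsunaga : ℕ → ℕ → ℤ
  | 0, _ => 0
  | 1, _ => 0
  | n + 2, k =>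
      if 1 ≤ k ∧ k ≤ n + 2 then
        ((n : ℤ) + 2) * matsunaga (n + 1) k + (beta (n + 2) : ℤ) * stirS (n + 2) k
      else 0

section Part3

variable {n : ℕ}

/-- lift a block along `Fin.castSucc` -/
def upB (B : Finset (Fin n)) : Finset (Fin (n+1)) := B.map Fin.castSuccEmb

/-- project a block back -/
noncomputable def downB (C : Finset (Fin (n+1))) : Finset (Fin n) :=
  C.preimage Fin.castSucc (Fin.castSucc_injective n).injOn

lemma mem_downB {C : Finset (Fin (n+1))} {z : Fin n} : z ∈ downB C ↔ z.castSucc ∈ C :=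
  Finset.mem_preimage

lemma mem_upB {B : Finset (Fin n)} {z : Fin n} : z.castSucc ∈ upB B ↔ z ∈ B :=
  Finset.mem_map' _

lemma last_not_mem_upB (B : Finset (Fin n)) : Fin.last n ∉ upB B := by
  rw [upB, Finset.mem_map]
  rintro ⟨x, -, hx⟩
  exact absurd hx (Fin.castSucc_lt_last x).ne

lemma card_upB (B : Finset (Fin n)) : (upB B).card = B.card := Finset.card_map _

lemma nonempty_upB {B : Finset (Fin n)} (h : B.Nonempty) : (upB B).Nonempty :=
  Finset.Nonempty.map h

/-- the lifted block, with `last` added iff the block contains `x` -/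
def stepf (x : Fin n) (B : Finset (Fin n)) : Finset (Fin (n+1)) :=
  if x ∈ B then insert (Fin.last n) (upB B) else upB B

lemma mem_stepf_castSucc {x z : Fin n} {B : Finset (Fin n)} :
    z.castSucc ∈ stepf x B ↔ z ∈ B := by
  rw [stepf]
  split_ifs with h
  · rw [Finset.mem_insert, mem_upB]
    constructor
    · rintro (h' | h')
      · exact absurd h' (Fin.castSucc_lt_last z).ne
      · exact h'
    · exact Or.inr
  · exact mem_upB

lemma mem_stepf_last {x : Fin n} {B : Finset (Fin n)} :
    Fin.last n ∈ stepf x B ↔ x ∈ B := by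
  rw [stepf]
  split_ifs with h
  · simp [h]
  · simpa [last_not_mem_upB B] using h

lemma stepf_eq_of_mem {x : Fin n} {B : Finset (Fin n)} (h : x ∈ B) :
    stepf x B = insert (Fin.last n) (upB B) := if_pos h

lemma downB_stepf (x : Fin n) (B : Finset (Fin n)) : downB (stepf x B) = B := by
  ext z; rw [mem_downB, mem_stepf_castSucc]

lemma card_stepf_ge (x : Fin n) (B : Finset (Fin n)) : B.card ≤ (stepf x B).card := by
  rw [stepf]
  split_ifs
  · calc B.card = (upB B).card := (card_upB B).symm
      _ ≤ (insert (Fin.last n) (upB B)).card := Finset.card_le_card (Finset.subset_insert _ _)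
  · rw [card_upB]

/-- add `last` to the block containing `x` -/
def stepAt (x : Fin n) (P : Finset (Finset (Fin n))) : Finset (Finset (Fin (n+1))) :=
  P.image (stepf x)

lemma stepAt_image_downB (x : Fin n) (P : Finset (Finset (Fin n))) :
    (stepAt x P).image downB = P := by
  rw [stepAt, Finset.image_image]
  calc P.image (downB ∘ stepf x) = P.image id :=
        Finset.image_congr (fun B _ => downB_stepf x B)
    _ = P := Finset.image_id

lemma stepAt_partition (x : Fin n) (P : Finset (Finset (Fin n))) (hP : IsSetPartition P) :
    IsSetPartition (stepAt x P) := by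
  constructor
  · rintro C hC
    rw [stepAt, Finset.mem_image] at hC
    obtain ⟨B, hB, rfl⟩ := hC
    have hne := hP.1 B hB
    rw [stepf]
    split_ifs
    · exact Finset.insert_nonempty _ _
    · exact nonempty_upB hne
  · intro y
    induction y using Fin.lastCases with
    | last =>
      obtain ⟨B, ⟨hB, hxB⟩, huniq⟩ := hP.2 x
      refine ⟨stepf x B, ⟨Finset.mem_image_of_mem _ hB, mem_stepf_last.2 hxB⟩, ?_⟩
      rintro C ⟨hC, hlC⟩
      rw [stepAt, Finset.mem_image] at hC
      obtain ⟨B', hB', rfl⟩ := hC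
      rw [mem_stepf_last] at hlC
      rw [huniq B' ⟨hB', hlC⟩]
    | cast z =>
      obtain ⟨B, ⟨hB, hzB⟩, huniq⟩ := hP.2 z
      refine ⟨stepf x B, ⟨Finset.mem_image_of_mem _ hB, mem_stepf_castSucc.2 hzB⟩, ?_⟩
      rintro C ⟨hC, hzC⟩
      rw [stepAt, Finset.mem_image] at hC
      obtain ⟨B', hB', rfl⟩ := hC
      rw [mem_stepf_castSucc] at hzC
      rw [huniq B' ⟨hB', hzC⟩]

lemma stepAt_card (x : Fin n) (P : Finset (Finset (Fin n))) (h2 : ∀ B ∈ P, 2 ≤ B.card) :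
    ∀ C ∈ stepAt x P, 2 ≤ C.card := by
  intro C hC
  rw [stepAt, Finset.mem_image] at hC
  obtain ⟨B, hB, rfl⟩ := hC
  exact le_trans (h2 B hB) (card_stepf_ge x B)

lemma stepAt_last_block {x : Fin n} {P : Finset (Finset (Fin n))} {C : Finset (Fin (n+1))}
    (hC : C ∈ stepAt x P) (hl : Fin.last n ∈ C) :
    ∃ B ∈ P, C = insert (Fin.last n) (upB B) ∧ x ∈ B := by
  rw [stepAt, Finset.mem_image] at hC
  obtain ⟨B, hB, rfl⟩ := hC
  have hxB : x ∈ B := mem_stepf_last.1 hl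
  exact ⟨B, hB, stepf_eq_of_mem hxB, hxB⟩

lemma stepAt_last_block_card {x : Fin n} {P : Finset (Finset (Fin n))} {C : Finset (Fin (n+1))}
    (h2 : ∀ B ∈ P, 2 ≤ B.card) (hC : C ∈ stepAt x P) (hl : Fin.last n ∈ C) : 3 ≤ C.card := by
  obtain ⟨B, hB, rfl, hxB⟩ := stepAt_last_block hC hl
  rw [Finset.card_insert_of_notMem (last_not_mem_upB B), card_upB]
  exact Nat.succ_le_succ (h2 B hB)

lemma stepAt_last_block_mem {x : Fin n} {P : Finset (Finset (Fin n))} {C : Finset (Fin (n+1))}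
    (hC : C ∈ stepAt x P) (hl : Fin.last n ∈ C) : x.castSucc ∈ C := by
  obtain ⟨B, _, rfl, hxB⟩ := stepAt_last_block hC hl
  exact Finset.mem_insert_of_mem (mem_upB.2 hxB)

end Part3

/-- the subtype of no-singleton set partitions -/
def PartNS (n : ℕ) := {P : Finset (Finset (Fin n)) // IsSetPartition P ∧ ∀ B ∈ P, 2 ≤ B.card}

instance (n : ℕ) : Finite (PartNS n) := by
  unfold PartNS; infer_instance

lemma beta_eq_card (n : ℕ) : beta n = Nat.card (PartNS n) := rfl

lemma beta_one : beta 1 = 0 := by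
  rw [beta_eq_card, Nat.card_eq_zero]
  left
  constructor
  rintro ⟨P, hP, h2⟩
  obtain ⟨B, ⟨hB, h0⟩, -⟩ := hP.2 0
  have hc := h2 B hB
  have : B.card ≤ 1 := le_trans (Finset.card_le_univ B) (by simp)
  omega

/-- monotonicity via adding `last` to the block of `0` -/
lemma beta_mono (n : ℕ) : beta (n+1) ≤ beta (n+2) := by
  rw [beta_eq_card, beta_eq_card]
  refine Nat.card_le_card_of_injective
    (fun P => (⟨stepAt 0 P.1, stepAt_partition 0 P.1 P.2.1, stepAt_card 0 P.1 P.2.2⟩ : PartNS (n+2))) ?_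
  rintro ⟨P, hP⟩ ⟨P', hP'⟩ h
  have h' : stepAt 0 P = stepAt 0 P' := congrArg Subtype.val h
  apply Subtype.ext
  show P = P'
  calc P = (stepAt 0 P).image downB := (stepAt_image_downB 0 P).symm
    _ = (stepAt 0 P').image downB := by rw [h']
    _ = P' := stepAt_image_downB 0 P'

section Growth

variable (n : ℕ)

/-- the special two-block partition `{{castSucc 1, last}, rest}` of `Fin (n+4)` -/
def QBig : Finset (Fin (n+4)) := upB ((Finset.univ : Finset (Fin (n+3))).erase 1)
def QPair : Finset (Fin (n+4)) := {(1 : Fin (n+3)).castSucc, Fin.last (n+3)}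
def Qstar : Finset (Finset (Fin (n+4))) := {QBig n, QPair n}

lemma mem_QPair {y : Fin (n+4)} : y ∈ QPair n ↔ y = (1 : Fin (n+3)).castSucc ∨ y = Fin.last (n+3) := by
  rw [QPair, Finset.mem_insert, Finset.mem_singleton]

lemma c1_ne_last : (1 : Fin (n+3)).castSucc ≠ Fin.last (n+3) := (Fin.castSucc_lt_last _).ne

lemma last_mem_QPair : Fin.last (n+3) ∈ QPair n := (mem_QPair n).2 (Or.inr rfl)

lemma last_not_mem_QBig : Fin.last (n+3) ∉ QBig n := last_not_mem_upB _

lemma castSucc_mem_QBig {z : Fin (n+3)} : z.castSucc ∈ QBig n ↔ z ≠ 1 := by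
  rw [QBig, mem_upB, Finset.mem_erase]
  simp

lemma castSucc_mem_QPair {z : Fin (n+3)} : z.castSucc ∈ QPair n ↔ z = 1 := by
  rw [mem_QPair]
  constructor
  · rintro (h | h)
    · exact Fin.castSucc_injective _ h
    · exact absurd h (Fin.castSucc_lt_last z).ne
  · rintro rfl; exact Or.inl rfl

lemma mem_Qstar {C : Finset (Fin (n+4))} : C ∈ Qstar n ↔ C = QBig n ∨ C = QPair n := by
  rw [Qstar, Finset.mem_insert, Finset.mem_singleton]

lemma QPair_card : (QPair n).card = 2 := by
  rw [QPair, Finset.card_insert_of_notMem (by rw [Finset.mem_singleton]; exact c1_ne_last n),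
    Finset.card_singleton]

lemma QBig_card : (QBig n).card = n + 2 := by
  rw [QBig, card_upB, Finset.card_erase_of_mem (Finset.mem_univ _), Finset.card_univ]
  simp

lemma Qstar_partition : IsSetPartition (Qstar n) := by
  constructor
  · intro C hC
    rcases (mem_Qstar n).1 hC with rfl | rfl
    · rw [← Finset.card_pos, QBig_card]; omega
    · rw [← Finset.card_pos, QPair_card]; omega
  · intro y
    induction y using Fin.lastCases with
    | last =>
      refine ⟨QPair n, ⟨(mem_Qstar n).2 (Or.inr rfl), last_mem_QPair n⟩, ?_⟩
      rintro C ⟨hC, hlC⟩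
      rcases (mem_Qstar n).1 hC with rfl | rfl
      · exact absurd hlC (last_not_mem_QBig n)
      · rfl
    | cast z =>
      by_cases hz : z = 1
      · subst hz
        refine ⟨QPair n, ⟨(mem_Qstar n).2 (Or.inr rfl), (castSucc_mem_QPair n).2 rfl⟩, ?_⟩
        rintro C ⟨hC, hzC⟩
        rcases (mem_Qstar n).1 hC with rfl | rfl
        · exact absurd ((castSucc_mem_QBig n).1 hzC) (by simp)
        · rfl
      · refine ⟨QBig n, ⟨(mem_Qstar n).2 (Or.inl rfl), (castSucc_mem_QBig n).2 hz⟩, ?_⟩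
        rintro C ⟨hC, hzC⟩
        rcases (mem_Qstar n).1 hC with rfl | rfl
        · rfl
        · exact absurd ((castSucc_mem_QPair n).1 hzC) hz

lemma Qstar_cards : ∀ C ∈ Qstar n, 2 ≤ C.card := by
  intro C hC
  rcases (mem_Qstar n).1 hC with rfl | rfl
  · rw [QBig_card]; omega
  · rw [QPair_card]

/-- separation property -/
def SepP {m : ℕ} (P : Finset (Finset (Fin (m+1)))) : Prop :=
  ∃ w : Fin (m+1), ∀ B ∈ P, (0 : Fin (m+1)) ∈ B → w ∉ B

/-- a partition that cannot be separated from `0` is the one-block partition -/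
lemma eq_single_of_not_sep {m : ℕ} (P : Finset (Finset (Fin (m+1)))) (hP : IsSetPartition P)
    (h : ¬ SepP P) :
    P = {Finset.univ} := by
  rw [SepP] at h
  push_neg at h
  obtain ⟨B0, ⟨hB0, h00⟩, hu⟩ := hP.2 0
  have hBu : B0 = Finset.univ := by
    apply Finset.eq_univ_of_forall
    intro w
    obtain ⟨B, hB, h0B, hwB⟩ := h w
    rwa [hu B ⟨hB, h0B⟩] at hwB
  rw [Finset.eq_singleton_iff_unique_mem]
  refine ⟨hBu ▸ hB0, ?_⟩
  intro C hC
  obtain ⟨y, hy⟩ := hP.1 C hC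
  obtain ⟨B, ⟨hB, hyB⟩, huy⟩ := hP.2 y
  rw [huy C ⟨hC, hy⟩, ← hBu]
  exact (huy B0 ⟨hB0, by rw [hBu]; exact Finset.mem_univ y⟩).symm


open Classical in
/-- the second injection: add `last` to a block away from `0`, or the special map -/
noncomputable def secondMap (P : Finset (Finset (Fin (n+3)))) : Finset (Finset (Fin (n+4))) :=
  if h : SepP P then stepAt h.choose P else Qstar n

lemma secondMap_partition (P : Finset (Finset (Fin (n+3)))) (hP : IsSetPartition P) :
    IsSetPartition (secondMap n P) := by
  rw [secondMap]
  split_ifs with h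
  · exact stepAt_partition _ P hP
  · exact Qstar_partition n

lemma secondMap_cards (P : Finset (Finset (Fin (n+3)))) (h2 : ∀ B ∈ P, 2 ≤ B.card) :
    ∀ C ∈ secondMap n P, 2 ≤ C.card := by
  rw [secondMap]
  split_ifs with h
  · exact stepAt_card _ P h2
  · exact Qstar_cards n

/-- blocks of `secondMap` containing `last` avoid `castSucc 0` -/
lemma secondMap_last_avoids (P : Finset (Finset (Fin (n+3)))) :
    ∀ C ∈ secondMap n P, Fin.last (n+3) ∈ C → (0 : Fin (n+3)).castSucc ∉ C := by
  rw [secondMap]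
  split_ifs with h
  · intro C hC hlC
    obtain ⟨B, hB, rfl, hwB⟩ := stepAt_last_block hC hlC
    intro hc0
    have h0B : (0 : Fin (n+3)) ∈ B := by
      rcases Finset.mem_insert.1 hc0 with h' | h'
      · exact absurd h' (Fin.castSucc_lt_last _).ne
      · exact mem_upB.1 h'
    exact (h.choose_spec B hB h0B) hwB
  · intro C hC hlC
    rcases (mem_Qstar n).1 hC with rfl | rfl
    · exact absurd hlC (last_not_mem_QBig n)
    · intro hc0
      have : (0 : Fin (n+3)) = 1 := (castSucc_mem_QPair n).1 hc0
      simp at this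

lemma firstMap_last_mem (P : Finset (Finset (Fin (n+3)))) :
    ∀ C ∈ stepAt (0 : Fin (n+3)) P, Fin.last (n+3) ∈ C → (0 : Fin (n+3)).castSucc ∈ C :=
  fun _ hC hl => stepAt_last_block_mem hC hl

/-- injectivity of secondMap -/
lemma secondMap_injective (P P' : Finset (Finset (Fin (n+3))))
    (hP : IsSetPartition P) (hP' : IsSetPartition P')
    (h2 : ∀ B ∈ P, 2 ≤ B.card) (h2' : ∀ B ∈ P', 2 ≤ B.card)
    (h : secondMap n P = secondMap n P') : P = P' := by
  by_cases hs : SepP P <;> by_cases hs' : SepP P'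
  · rw [secondMap, dif_pos hs, secondMap, dif_pos hs'] at h
    calc P = (stepAt hs.choose P).image downB := (stepAt_image_downB _ P).symm
      _ = (stepAt hs'.choose P').image downB := by rw [h]
      _ = P' := stepAt_image_downB _ P'
  · exfalso
    rw [secondMap, dif_pos hs, secondMap, dif_neg hs'] at h
    have hmem : QPair n ∈ stepAt hs.choose P := by rw [h]; exact (mem_Qstar n).2 (Or.inr rfl)
    have := stepAt_last_block_card h2 hmem (last_mem_QPair n)
    rw [QPair_card] at this
    omega
  · exfalso
    rw [secondMap, dif_neg hs, secondMap, dif_pos hs'] at h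
    have hmem : QPair n ∈ stepAt hs'.choose P' := by rw [← h]; exact (mem_Qstar n).2 (Or.inr rfl)
    have := stepAt_last_block_card h2' hmem (last_mem_QPair n)
    rw [QPair_card] at this
    omega
  · rw [eq_single_of_not_sep P hP hs, eq_single_of_not_sep P' hP' hs']

/-- the images of the two injections are disjoint -/
lemma maps_disjoint (P P' : Finset (Finset (Fin (n+3)))) (hP : IsSetPartition P)
    (h : stepAt (0 : Fin (n+3)) P = secondMap n P') : False := by
  have hQ : IsSetPartition (stepAt (0 : Fin (n+3)) P) := stepAt_partition _ P hP
  obtain ⟨C, ⟨hC, hlC⟩, -⟩ := hQ.2 (Fin.last (n+3))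
  have h1 : (0 : Fin (n+3)).castSucc ∈ C := firstMap_last_mem n P C hC hlC
  have h2 : (0 : Fin (n+3)).castSucc ∉ C := by
    apply secondMap_last_avoids n P' C _ hlC
    rw [← h]; exact hC
  exact h2 h1

lemma two_beta_le (n : ℕ) : 2 * beta (n+3) ≤ beta (n+4) := by
  rw [beta_eq_card, beta_eq_card]
  have : Nat.card (PartNS (n+3) ⊕ PartNS (n+3)) = 2 * Nat.card (PartNS (n+3)) := by
    rw [Nat.card_sum]; ring
  rw [← this]
  refine Nat.card_le_card_of_injective
    (Sum.elim
      (fun P => (⟨stepAt 0 P.1, stepAt_partition 0 P.1 P.2.1, stepAt_card 0 P.1 P.2.2⟩ : PartNS (n+4)))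
      (fun P => (⟨secondMap n P.1, secondMap_partition n P.1 P.2.1, secondMap_cards n P.1 P.2.2⟩ : PartNS (n+4)))) ?_
  rintro (P | P) (P' | P') h <;>
    have h' := congrArg Subtype.val h <;>
    obtain ⟨P, hP⟩ := P <;> obtain ⟨P', hP'⟩ := P'
  · have h'' : stepAt (0 : Fin (n+3)) P = stepAt 0 P' := h'
    congr 1
    apply Subtype.ext
    calc P = (stepAt (0:Fin (n+3)) P).image downB := (stepAt_image_downB _ P).symm
      _ = (stepAt (0:Fin (n+3)) P').image downB := by rw [h'']
      _ = P' := stepAt_image_downB _ P'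
  · exact absurd h' (by intro hh; exact maps_disjoint n P P' hP.1 hh)
  · exact absurd h'.symm (by intro hh; exact maps_disjoint n P' P hP'.1 hh)
  · congr 1
    apply Subtype.ext
    exact secondMap_injective n P P' hP.1 hP'.1 hP.2 hP'.2 h'

lemma beta_growth (m : ℕ) (hm : 3 ≤ m) : 2 * beta m ≤ beta (m+1) := by
  obtain ⟨l, rfl⟩ : ∃ l, m = l + 3 := ⟨m - 3, by omega⟩
  exact two_beta_le l

lemma beta_two_le_three : beta 2 ≤ beta 3 := beta_mono 1

end Growth

lemma stirS_zero (n : ℕ) : stirS (n+1) 0 = 0 := rfl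

lemma stirS_eq_zero_of_lt : ∀ n k, n < k → stirS n k = 0
  | 0, _+1, _ => rfl
  | n+1, k+1, h => by
      have h1 : n < k := Nat.lt_of_succ_lt_succ h
      have h2 : n < k+1 := Nat.lt_succ_of_lt h1
      simp [stirS, stirS_eq_zero_of_lt n k h1, stirS_eq_zero_of_lt n (k+1) h2]

lemma stirS_poly (n : ℕ) (x : ℚ) :
    ∑ k ∈ range (n+1), (stirS n k : ℚ) * x ^ k = ∏ i ∈ range n, (x - i) := by
  induction n with
  | zero => simp [stirS]
  | succ n ih =>
    have key : (n:ℚ) * ∑ k ∈ range (n+1), (stirS n (k+1) : ℚ) * x ^ (k+1)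
        = (n:ℚ) * ∑ k ∈ range (n+1), (stirS n k : ℚ) * x ^ k := by
      rcases n with _ | m
      · simp
      · congr 1
        rw [Finset.sum_range_succ' (fun k => (stirS (m+1) k : ℚ) * x ^ k) (m+1),
          Finset.sum_range_succ (fun k => (stirS (m+1) (k+1) : ℚ) * x ^ (k+1)) (m+1),
          stirS_zero, stirS_eq_zero_of_lt (m+1) (m+2) (by omega)]
        push_cast; ring
    rw [prod_range_succ, ← ih]
    rw [Finset.sum_range_succ' (fun k => (stirS (n+1) k : ℚ) * x ^ k) (n+1)]
    have e1 : ∀ k ∈ range (n+1), (stirS (n+1) (k+1) : ℚ) * x ^ (k+1)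
        = (stirS n k : ℚ) * x ^ k * x - (n:ℚ) * ((stirS n (k+1) : ℚ) * x ^ (k+1)) := by
      intro k _
      rw [show stirS (n+1) (k+1) = stirS n k - (n:ℤ) * stirS n (k+1) from rfl]
      push_cast; ring
    rw [Finset.sum_congr rfl e1, Finset.sum_sub_distrib, ← Finset.sum_mul, ← Finset.mul_sum,
      key, stirS_zero]
    push_cast; ring

lemma matsunaga_eq_zero_of_lt (n k : ℕ) (h : n < k) : matsunaga n k = 0 := by
  match n with
  | 0 => rfl
  | 1 => rfl
  | m + 2 => rw [matsunaga, if_neg (by omega)]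

lemma matsunaga_zero_right (n : ℕ) : matsunaga n 0 = 0 := by
  match n with
  | 0 => rfl
  | 1 => rfl
  | m + 2 => rw [matsunaga, if_neg (by omega)]

lemma matsunaga_succ (n k : ℕ) (hk1 : 1 ≤ k) (hk2 : k ≤ n + 2) :
    matsunaga (n+2) k = ((n:ℤ)+2) * matsunaga (n+1) k + (beta (n+2) : ℤ) * stirS (n+2) k := by
  rw [matsunaga, if_pos ⟨hk1, hk2⟩]

lemma stirS_sum_Icc (n : ℕ) (x : ℚ) :
    ∑ k ∈ Icc 1 (n+1), (stirS (n+1) k : ℚ) * x ^ k = ∏ i ∈ range (n+1), (x - i) := by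
  rw [← stirS_poly (n+1) x]
  rw [Finset.range_eq_Ico, Finset.sum_eq_sum_Ico_succ_bot (by omega : 0 < n+2)]
  rw [stirS_zero, show Ico (0+1) (n+2) = Icc 1 (n+1) from rfl]
  simp

lemma G_closed (n : ℕ) (x : ℚ) :
    ∑ k ∈ Icc 1 n, (matsunaga n k : ℚ) * x ^ k
      = ∑ m ∈ Icc 2 n, ((n.factorial : ℚ) / m.factorial) * (beta m : ℚ)
          * ∏ i ∈ range m, (x - i) := by
  induction n with
  | zero => simp
  | succ n ih =>
    match n, ih with
    | 0, _ => simp [show matsunaga 1 1 = 0 from rfl]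
    | n + 1, ih =>
      have step : ∀ k ∈ Icc 1 (n+2), (matsunaga (n+2) k : ℚ) * x ^ k
          = ((n:ℚ)+2) * ((matsunaga (n+1) k : ℚ) * x ^ k)
            + (beta (n+2) : ℚ) * ((stirS (n+2) k : ℚ) * x ^ k) := by
        intro k hk
        rw [mem_Icc] at hk
        rw [matsunaga_succ n k hk.1 hk.2]
        push_cast; ring
      rw [Finset.sum_congr rfl step, Finset.sum_add_distrib, ← Finset.mul_sum, ← Finset.mul_sum]
      rw [stirS_sum_Icc (n+1) x]
      rw [Finset.sum_Icc_succ_top (by omega : 1 ≤ n+2),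
          matsunaga_eq_zero_of_lt (n+1) (n+2) (by omega)]
      push_cast
      rw [zero_mul, add_zero, ih]
      rw [Finset.sum_Icc_succ_top (by omega : 2 ≤ n+2), Finset.mul_sum]
      have hterm : ∀ m ∈ Icc 2 (n+1),
          ((n:ℚ)+2) * (((n+1).factorial : ℚ) / m.factorial * (beta m : ℚ) * ∏ i ∈ range m, (x - i))
          = ((n+2).factorial : ℚ) / m.factorial * (beta m : ℚ) * ∏ i ∈ range m, (x - i) := by
        intro m _
        rw [Nat.factorial_succ (n+1)]
        push_cast; ring
      rw [Finset.sum_congr rfl hterm]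
      congr 1
      rw [div_self (by exact_mod_cast Nat.factorial_pos (n+2) |>.ne')]
      push_cast; ring

lemma stirU_eq_zero_of_lt : ∀ n k, n < k → stirU n k = 0
  | 0, _+1, _ => rfl
  | n+1, k+1, h => by
      have h1 : n < k := Nat.lt_of_succ_lt_succ h
      have h2 : n < k+1 := Nat.lt_succ_of_lt h1
      simp [stirU, stirU_eq_zero_of_lt n k h1, stirU_eq_zero_of_lt n (k+1) h2]

lemma stirS_eq_neg_pow : ∀ n k, stirS n k = (-1:ℤ)^(n+k) * stirU n k
  | 0, 0 => by simp [stirS, stirU]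
  | 0, k+1 => by simp [stirS, stirU]
  | n+1, 0 => by simp [stirS, stirU]
  | n+1, k+1 => by
      have h1 := stirS_eq_neg_pow n k
      have h2 := stirS_eq_neg_pow n (k+1)
      show stirS n k - (n : ℤ) * stirS n (k + 1) = _
      show _ = (-1:ℤ)^(n+1+(k+1)) * (stirU n k + n * stirU n (k+1) : ℕ)
      rw [h1, h2]
      have : (-1:ℤ)^(n+1+(k+1)) = (-1:ℤ)^(n+k) := by
        rw [show n+1+(k+1) = (n+k)+2 by omega, pow_add]; norm_num
      rw [this, show n+(k+1) = (n+k)+1 by omega, pow_add]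
      push_cast; ring

lemma stirU_mul_le : ∀ n k, n * stirU n k ≤ stirU (n+1) k
  | n, 0 => by
      match n with
      | 0 => simp [stirU]
      | m+1 => simp [show stirU (m+1) 0 = 0 from rfl]
  | n, k+1 => by
      show n * stirU n (k+1) ≤ stirU n k + n * stirU n (k+1)
      omega

/-- `a n k = (-1)^(n+k) * matsunaga n k` -/
noncomputable def aM (n k : ℕ) : ℤ := (-1:ℤ)^(n+k) * matsunaga n k

lemma aM_rec (n k : ℕ) (hn : 1 ≤ n) :
    aM (n+1) k = (beta (n+1) : ℤ) * stirU (n+1) k - ((n:ℤ)+1) * aM n k := by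
  obtain ⟨m, rfl⟩ : ∃ m, n = m + 1 := ⟨n - 1, by omega⟩
  by_cases hk : 1 ≤ k ∧ k ≤ m + 2
  · rw [aM, aM, matsunaga_succ m k hk.1 hk.2, stirS_eq_neg_pow]
    have h1 : (-1:ℤ)^(m+2+k) * (-1:ℤ)^(m+2+k) = 1 := by
      rw [← pow_add]; exact Even.neg_one_pow ⟨m+2+k, rfl⟩
    have h2 : (-1:ℤ)^(m+2+k) = -(-1:ℤ)^(m+1+k) := by
      rw [show m+2+k = (m+1+k)+1 by omega, pow_succ]; ring
    push_cast
    calc (-1:ℤ)^(m+2+k) * ((((m:ℤ)+2)) * matsunaga (m+1) k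
          + (beta (m+2) : ℤ) * ((-1:ℤ)^(m+2+k) * (stirU (m+2) k : ℤ)))
        = (beta (m+2) : ℤ) * ((-1:ℤ)^(m+2+k) * (-1:ℤ)^(m+2+k)) * (stirU (m+2) k : ℤ)
          + ((m:ℤ)+2) * ((-1:ℤ)^(m+2+k) * matsunaga (m+1) k) := by ring
      _ = _ := by rw [h1, h2]; push_cast; ring
  · have hk' : k = 0 ∨ m + 2 < k := by
      rcases Nat.eq_zero_or_pos k with h | h
      · exact Or.inl h
      · right; by_contra hh; exact hk ⟨h, by omega⟩
    have hM2 : matsunaga (m+2) k = 0 := by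
      rcases hk' with h | h
      · rw [h]; exact matsunaga_zero_right _
      · exact matsunaga_eq_zero_of_lt _ _ h
    have hM1 : matsunaga (m+1) k = 0 := by
      rcases hk' with h | h
      · rw [h]; exact matsunaga_zero_right _
      · exact matsunaga_eq_zero_of_lt _ _ (by omega)
    have hU : stirU (m+2) k = 0 := by
      rcases hk' with h | h
      · rw [h]; rfl
      · exact stirU_eq_zero_of_lt _ _ h
    rw [aM, aM, hM2, hM1, hU]
    push_cast; ring

lemma aM_one (k : ℕ) : aM 1 k = 0 := by
  rw [aM, show matsunaga 1 k = 0 from rfl]; ring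

lemma aM_two (k : ℕ) : aM 2 k = (beta 2 : ℤ) * stirU 2 k := by
  have := aM_rec 1 k le_rfl
  rw [aM_one] at this
  push_cast at this ⊢
  linarith [this]

lemma aM_three (k : ℕ) : aM 3 k = (beta 3 : ℤ) * stirU 3 k - 3 * ((beta 2 : ℤ) * stirU 2 k) := by
  have := aM_rec 2 k (by omega)
  rw [aM_two] at this
  push_cast at this ⊢
  linarith [this]

lemma aM_four (k : ℕ) : aM 4 k = (beta 4 : ℤ) * stirU 4 k - 4 * (beta 3 : ℤ) * stirU 3 k
    + 12 * (beta 2 : ℤ) * stirU 2 k := by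
  have := aM_rec 3 k (by omega)
  rw [aM_three] at this
  push_cast at this ⊢
  linarith [this]

lemma base_nonneg (k : ℕ) : 0 ≤ aM 4 k := by
  have h43 := beta_growth 3 le_rfl
  have h32 := beta_two_le_three
  rw [aM_four]
  have hb2 : (0:ℤ) ≤ (beta 2 : ℤ) := Int.natCast_nonneg _
  have hb3 : (0:ℤ) ≤ (beta 3 : ℤ) := Int.natCast_nonneg _
  have h43' : 2 * (beta 3 : ℤ) ≤ (beta 4 : ℤ) := by exact_mod_cast h43
  have h32' : (beta 2 : ℤ) ≤ (beta 3 : ℤ) := by exact_mod_cast h32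
  match k with
  | 0 => simp [show stirU 4 0 = 0 from rfl, show stirU 3 0 = 0 from rfl,
      show stirU 2 0 = 0 from rfl]
  | 1 => simp only [show stirU 4 1 = 6 by rfl, show stirU 3 1 = 2 by rfl,
      show stirU 2 1 = 1 by rfl]; push_cast; linarith
  | 2 => simp only [show stirU 4 2 = 11 by rfl, show stirU 3 2 = 3 by rfl,
      show stirU 2 2 = 1 by rfl]; push_cast; linarith
  | 3 => simp only [show stirU 4 3 = 6 by rfl, show stirU 3 3 = 1 by rfl,
      show stirU 2 3 = 0 by rfl]; push_cast; linarith
  | 4 => simp only [show stirU 4 4 = 1 by rfl, show stirU 3 4 = 0 by rfl,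
      show stirU 2 4 = 0 by rfl]; push_cast; linarith
  | (m+5) =>
      rw [stirU_eq_zero_of_lt 4 (m+5) (by omega), stirU_eq_zero_of_lt 3 (m+5) (by omega),
        stirU_eq_zero_of_lt 2 (m+5) (by omega)]
      push_cast; linarith

lemma base_step (k : ℕ) : 5 * aM 4 k ≤ (beta 5 : ℤ) * stirU 5 k := by
  have h43 := beta_growth 3 le_rfl
  have h54 := beta_growth 4 (by omega)
  have h32 := beta_two_le_three
  rw [aM_four]
  have hb2 : (0:ℤ) ≤ (beta 2 : ℤ) := Int.natCast_nonneg _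
  have hb3 : (0:ℤ) ≤ (beta 3 : ℤ) := Int.natCast_nonneg _
  have hb4 : (0:ℤ) ≤ (beta 4 : ℤ) := Int.natCast_nonneg _
  have hb5 : (0:ℤ) ≤ (beta 5 : ℤ) := Int.natCast_nonneg _
  have h43' : 2 * (beta 3 : ℤ) ≤ (beta 4 : ℤ) := by exact_mod_cast h43
  have h54' : 2 * (beta 4 : ℤ) ≤ (beta 5 : ℤ) := by exact_mod_cast h54
  have h32' : (beta 2 : ℤ) ≤ (beta 3 : ℤ) := by exact_mod_cast h32
  match k with
  | 0 => simp [show stirU 4 0 = 0 from rfl, show stirU 3 0 = 0 from rfl,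
      show stirU 2 0 = 0 from rfl, show stirU 5 0 = 0 from rfl]
  | 1 => simp only [show stirU 4 1 = 6 by rfl, show stirU 3 1 = 2 by rfl,
      show stirU 2 1 = 1 by rfl, show stirU 5 1 = 24 by rfl]; push_cast; linarith
  | 2 => simp only [show stirU 4 2 = 11 by rfl, show stirU 3 2 = 3 by rfl,
      show stirU 2 2 = 1 by rfl, show stirU 5 2 = 50 by rfl]; push_cast; linarith
  | 3 => simp only [show stirU 4 3 = 6 by rfl, show stirU 3 3 = 1 by rfl,
      show stirU 2 3 = 0 by rfl, show stirU 5 3 = 35 by rfl]; push_cast; linarith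
  | 4 => simp only [show stirU 4 4 = 1 by rfl, show stirU 3 4 = 0 by rfl,
      show stirU 2 4 = 0 by rfl, show stirU 5 4 = 10 by rfl]; push_cast; linarith
  | 5 => simp only [show stirU 4 5 = 0 by rfl, show stirU 3 5 = 0 by rfl,
      show stirU 2 5 = 0 by rfl, show stirU 5 5 = 1 by rfl]; push_cast; linarith
  | (m+6) =>
      rw [stirU_eq_zero_of_lt 4 (m+6) (by omega), stirU_eq_zero_of_lt 3 (m+6) (by omega),
        stirU_eq_zero_of_lt 2 (m+6) (by omega), stirU_eq_zero_of_lt 5 (m+6) (by omega)]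
      push_cast; linarith

lemma aM_nonneg (n : ℕ) (hn : 4 ≤ n) : ∀ k, 0 ≤ aM n k ∧
    ((n:ℤ)+1) * aM n k ≤ (beta (n+1) : ℤ) * stirU (n+1) k := by
  induction n, hn using Nat.le_induction with
  | base => exact fun k => ⟨base_nonneg k, by have := base_step k; push_cast at this ⊢; linarith⟩
  | succ n hn ih =>
    intro k
    have hrec := aM_rec n k (by omega)
    have ih1 := (ih k).1
    have ih2 := (ih k).2
    constructor
    · linarith
    · have hnn : 0 ≤ ((n:ℤ)+1) * aM n k := mul_nonneg (by positivity) ih1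
      have hup : aM (n+1) k ≤ (beta (n+1) : ℤ) * stirU (n+1) k := by linarith
      have hU : ((n:ℤ)+1) * (stirU (n+1) k : ℤ) ≤ (stirU (n+2) k : ℤ) := by
        exact_mod_cast stirU_mul_le (n+1) k
      have hB : 2 * (beta (n+1) : ℤ) ≤ (beta (n+2) : ℤ) := by
        exact_mod_cast beta_growth (n+1) (by omega)
      have hUnn : (0:ℤ) ≤ (stirU (n+1) k : ℤ) := Int.natCast_nonneg _
      have hBnn : (0:ℤ) ≤ (beta (n+1) : ℤ) := Int.natCast_nonneg _
      have hAnn : 0 ≤ aM (n+1) k := by linarith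
      -- (n+2) * aM (n+1) k ≤ (n+2) * β_{n+1} * U_{n+1} ≤ 2β_{n+1} (n+1) U_{n+1} ≤ β_{n+2} U_{n+2}
      have c1 : ((n:ℤ)+1+1) * aM (n+1) k ≤ ((n:ℤ)+2) * ((beta (n+1) : ℤ) * stirU (n+1) k) := by
        nlinarith
      have c2 : ((n:ℤ)+2) * ((beta (n+1) : ℤ) * stirU (n+1) k)
          ≤ 2 * (beta (n+1) : ℤ) * (((n:ℤ)+1) * stirU (n+1) k) := by nlinarith
      have c3 : 2 * (beta (n+1) : ℤ) * (((n:ℤ)+1) * stirU (n+1) k)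
          ≤ (beta (n+2) : ℤ) * stirU (n+2) k := by nlinarith
      have hfin : ((n:ℤ)+1+1) * aM (n+1) k ≤ (beta (n+2) : ℤ) * stirU (n+2) k :=
        le_trans c1 (le_trans c2 c3)
      rw [show n+1+1 = n+2 from rfl]
      push_cast at hfin ⊢
      linarith

lemma abs_matsunaga (n k : ℕ) (hn : 4 ≤ n) :
    |matsunaga n k| = (-1)^(n+k) * matsunaga n k := by
  have h := (aM_nonneg n hn k).1
  rw [aM] at h
  rcases Nat.even_or_odd (n+k) with he | ho
  · rw [he.neg_one_pow] at h ⊢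
    rw [one_mul] at h ⊢
    exact abs_of_nonneg h
  · rw [ho.neg_one_pow] at h ⊢
    have : matsunaga n k ≤ 0 := by linarith
    rw [abs_of_nonpos this]; ring

lemma prod_asc (n m : ℕ) : ∏ i ∈ range m, ((n:ℚ) + i) = (n.ascFactorial m : ℚ) := by
  induction m with
  | zero => simp
  | succ m ih => rw [prod_range_succ, ih, Nat.ascFactorial_succ]; push_cast; ring

lemma asc_choose (n m : ℕ) (hn : 1 ≤ n) :
    n.ascFactorial m = (n+m-1).choose (n-1) * m.factorial := by
  have h1 : (n-1).factorial * n.ascFactorial m = (n+m-1).factorial :=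
    Nat.factorial_mul_ascFactorial' n m (by omega)
  have h2 : (n+m-1).choose (n-1) * (n-1).factorial * ((n+m-1)-(n-1)).factorial
      = (n+m-1).factorial := Nat.choose_mul_factorial_mul_factorial (by omega)
  have h3 : (n+m-1)-(n-1) = m := by omega
  rw [h3] at h2
  have := Nat.factorial_pos (n-1)
  apply Nat.eq_of_mul_eq_mul_left this
  rw [h1, ← h2]; ring

lemma neg_one_pow_sub (a b : ℕ) (h : b ≤ a) : ((-1:ℚ))^(a-b) = (-1)^(a+b) := by
  have : a + b = (a - b) + 2*b := by omega
  rw [this, pow_add, pow_mul]; norm_num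

/-- For `n ≥ 4`, the weighted total count satisfies
`(1/n!) * ∑_{k=1}^{n} |M n k| * n^k
  = ∑_{j=0}^{n-1} (2n-1-j choose n-1) * (-1)^j * beta (n-j)`. -/
theorem matsunaga_weighted_total (n : ℕ) (hn : 4 ≤ n) :
    (1 / (n.factorial : ℚ)) *
        ∑ k ∈ Finset.Icc 1 n, |(matsunaga n k : ℚ)| * (n : ℚ) ^ k =
      ∑ j ∈ Finset.range n,
        ((2 * n - 1 - j).choose (n - 1) : ℚ) * (-1 : ℚ) ^ j * (beta (n - j) : ℚ) := by
  have hstep : ∀ k ∈ Icc 1 n, |(matsunaga n k : ℚ)| * (n : ℚ) ^ k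
      = (-1:ℚ)^n * ((matsunaga n k : ℚ) * (-(n:ℚ)) ^ k) := by
    intro k _
    have h1 : |(matsunaga n k : ℚ)| = ((|matsunaga n k| : ℤ) : ℚ) := by push_cast; rfl
    rw [h1, abs_matsunaga n k hn]
    push_cast
    rw [pow_add, neg_pow (n:ℚ) k]
    ring
  rw [Finset.sum_congr rfl hstep, ← Finset.mul_sum, G_closed n (-(n:ℚ))]
  -- now LHS = (1/n!) * ((-1)^n * Σ_{m∈Icc 2 n} (n!/m!) β_m ∏ (-n - i))
  have hterm : ∀ m ∈ Icc 2 n,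
      (1 / (n.factorial : ℚ)) * ((-1:ℚ)^n *
        (((n.factorial : ℚ) / m.factorial) * (beta m : ℚ) * ∏ i ∈ range m, (-(n:ℚ) - i)))
      = ((n+m-1).choose (n-1) : ℚ) * (-1:ℚ)^(n+m) * (beta m : ℚ) := by
    intro m hm
    rw [mem_Icc] at hm
    have hp : ∏ i ∈ range m, (-(n:ℚ) - i) = (-1:ℚ)^m * (n.ascFactorial m : ℚ) := by
      calc ∏ i ∈ range m, (-(n:ℚ) - i) = ∏ i ∈ range m, (-1) * ((n:ℚ)+i) :=
            Finset.prod_congr rfl (by intros; ring)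
        _ = (∏ _i ∈ range m, (-1:ℚ)) * ∏ i ∈ range m, ((n:ℚ)+i) := Finset.prod_mul_distrib
        _ = (-1:ℚ)^m * (n.ascFactorial m : ℚ) := by rw [Finset.prod_const, prod_asc]; simp
    rw [hp, asc_choose n m (by omega)]
    have hfn : (n.factorial : ℚ) ≠ 0 := by exact_mod_cast (Nat.factorial_pos n).ne'
    have hfm : (m.factorial : ℚ) ≠ 0 := by exact_mod_cast (Nat.factorial_pos m).ne'
    push_cast
    rw [pow_add]
    field_simp
  rw [Finset.mul_sum, Finset.mul_sum, Finset.sum_congr rfl hterm]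
  -- RHS: split off j = n-1 and reindex
  obtain ⟨p, rfl⟩ : ∃ p, n = p + 1 := ⟨n - 1, by omega⟩
  rw [Finset.sum_range_succ]
  have hlast : ((2*(p+1)-1-p).choose ((p+1)-1) : ℚ) * (-1:ℚ)^p * (beta ((p+1)-p) : ℚ) = 0 := by
    rw [show (p+1)-p = 1 by omega, beta_one]; simp
  rw [hlast, add_zero]
  refine Finset.sum_nbij' (fun m => (p+1) - m) (fun j => (p+1) - j) ?_ ?_ ?_ ?_ ?_
  · intro m hm; rw [mem_Icc] at hm; rw [mem_range]; omega
  · intro j hj; rw [mem_range] at hj; rw [mem_Icc]; omega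
  · intro m hm; rw [mem_Icc] at hm; omega
  · intro j hj; rw [mem_range] at hj; omega
  · intro m hm
    rw [mem_Icc] at hm
    rw [show 2*(p+1)-1-((p+1)-m) = (p+1)+m-1 by omega, show (p+1)-((p+1)-m) = m by omega,
      show (p+1)-1 = p by omega]
    rw [show ((-1:ℚ))^((p+1)-m) = (-1:ℚ)^((p+1)+m) from neg_one_pow_sub (p+1) m (by omega)]
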